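/- arXiv:1309.4011 — 3 statements merged into one kernel-verified Lean document; each statement's English description precedes it below -/
import Mathlib

section
/- Let k be a field and M a cancellative, torsion-free commutative additive monoid, and let I be a prime monoid ideal of M. Then the ideal of the monoid algebra AddMonoidAlgebra k M generated by the monomials {single m 1 | m ∈ I} is a prime ideal of the ring AddMonoidAlgebra k M. -/
/-!
Because `I` is an ideal whose complement is a submonoid, `a + b ∉ I` holds exactly when `a ∉ I`
and `b ∉ I`. Hence sending the monomials with exponent in `I` to `0` and fixing the others is a
`k`-algebra endomorphism of `k[M]`, and its kernel is the ideal spanned by those monomials. The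
kernel of a map into a domain is prime, and `k[M]` is a domain because a cancellative
torsion-free commutative monoid has unique sums: this can be checked inside finitely generated
submonoids, which embed into a free abelian group of finite rank.
-/

/-- A monoid ideal of a commutative additive monoid `M`: a subset `I` such that
`m + m' ∈ I` whenever `m ∈ I` and `m' ∈ M`. -/
def IsMonoidIdeal {M : Type*} [AddCommMonoid M] (I : Set M) : Prop :=
  ∀ m ∈ I, ∀ m' : M, m + m' ∈ I

/-- A prime monoid ideal: a monoid ideal whose complement is an additive submonoid. -/
def IsPrimeMonoidIdeal {M : Type*} [AddCommMonoid M] (I : Set M) : Prop :=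
  IsMonoidIdeal I ∧ (0 : M) ∉ I ∧ ∀ m m' : M, m ∉ I → m' ∉ I → m + m' ∉ I

theorem uniqueSums_of_isAddTorsionFree {M : Type*} [AddCancelCommMonoid M] [IsAddTorsionFree M] :
    UniqueSums M where
  uniqueAdd_of_nonempty {A B} hA hB := by
    classical
    let N := AddSubmonoid.closure (↑(A ∪ B) : Set M)
    let : AddCancelCommMonoid N :=
      Subtype.val_injective.addCancelCommMonoid _ rfl (fun _ _ => rfl) (fun _ _ => rfl)
    have : AddMonoid.FG N := (AddMonoid.fg_iff_addSubmonoid_fg N).mpr ⟨A ∪ B, rfl⟩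
    have : IsAddTorsionFree N := Subtype.val_injective.isAddTorsionFree N.subtype
    have lift_map {C : Finset M} (hC : C ⊆ A ∪ B) : (C.subtype (· ∈ N)).map (.subtype _) = C := by
      rw [Finset.subtype_map, Finset.filter_true_of_mem]
      exact fun c hc => AddSubmonoid.subset_closure (hC hc)
    obtain ⟨a, ha, b, hb, hab⟩ := UniqueSums.uniqueAdd_of_nonempty
      (Finset.map_nonempty.mp ((lift_map Finset.subset_union_left).symm ▸ hA))
      (Finset.map_nonempty.mp ((lift_map Finset.subset_union_right).symm ▸ hB))
    rw [← UniqueAdd.addHom_map_iff (.subtype _) fun _ _ => rfl, lift_map Finset.subset_union_left,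
      lift_map Finset.subset_union_right] at hab
    exact ⟨a, Finset.mem_subtype.mp ha, b, Finset.mem_subtype.mp hb, hab⟩

namespace IsPrimeMonoidIdeal

open AddMonoidAlgebra

variable {M : Type*} [AddCommMonoid M] {I : Set M}

theorem add_mem_iff (hI : IsPrimeMonoidIdeal I) {a b : M} : a + b ∈ I ↔ a ∈ I ∨ b ∈ I := by
  refine ⟨fun hab => ?_, ?_⟩
  · by_contra! h
    exact hI.2.2 a b h.1 h.2 hab
  · rintro (ha | hb)
    · exact hI.1 a ha b
    · exact add_comm b a ▸ hI.1 b hb a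

section killMonomials

variable (k : Type*) [CommSemiring k] (hI : IsPrimeMonoidIdeal I)

open Classical in
noncomputable def killMonomials : AddMonoidAlgebra k M →ₐ[k] AddMonoidAlgebra k M :=
  lift k _ M
    { toFun m := if m.toAdd ∈ I then 0 else single m.toAdd 1
      map_one' := by simp [hI.2.1, one_def]
      map_mul' a b := by
        simp only [toAdd_mul, hI.add_mem_iff]
        split_ifs <;> simp_all [single_mul_single] }

theorem killMonomials_single_of_mem {m : M} (hm : m ∈ I) (c : k) :
    hI.killMonomials k (single m c) = 0 := by
  simp [killMonomials, lift_single, hm]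

theorem killMonomials_single_of_notMem {m : M} (hm : m ∉ I) (c : k) :
    hI.killMonomials k (single m c) = single m c := by
  simp [killMonomials, lift_single, hm]

end killMonomials

theorem ker_killMonomials (k : Type*) [CommRing k] (hI : IsPrimeMonoidIdeal I) :
    RingHom.ker (hI.killMonomials k) =
      Ideal.span {x : AddMonoidAlgebra k M | ∃ m ∈ I, x = single m 1} := by
  set J := Ideal.span {x : AddMonoidAlgebra k M | ∃ m ∈ I, x = single m 1}
  refine le_antisymm (fun f hf => ?_) (Ideal.span_le.mpr ?_)
  · have sub_mem (f : AddMonoidAlgebra k M) : f - hI.killMonomials k f ∈ J := by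
      induction f using induction_linear with
      | zero => simp
      | add f g hf hg => simpa only [map_add, add_sub_add_comm] using J.add_mem hf hg
      | single m c =>
        by_cases hm : m ∈ I
        · rw [killMonomials_single_of_mem k hI hm, sub_zero]
          simpa [single_mul_single] using
            J.mul_mem_left (single 0 c) (Ideal.subset_span ⟨m, hm, rfl⟩)
        · rw [killMonomials_single_of_notMem k hI hm, sub_self]
          exact J.zero_mem
    simpa [RingHom.mem_ker.mp hf] using sub_mem f
  · rintro _ ⟨m, hm, rfl⟩
    exact killMonomials_single_of_mem k hI hm 1

end IsPrimeMonoidIdeal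

/-- Let `k` be a field and `M` a cancellative, torsion-free commutative additive monoid.
For a prime monoid ideal `I` of `M`, the ideal of `AddMonoidAlgebra k M` generated by the
monomials `single m 1`, `m ∈ I`, is a prime ideal. -/
theorem isPrime_span_monomials_of_primeMonoidIdeal (k : Type*) [Field k] {M : Type*}
    [AddCancelCommMonoid M]
    (htf : ∀ (n : ℕ) (a b : M), 0 < n → n • a = n • b → a = b)
    (I : Set M) (hI : IsPrimeMonoidIdeal I) :
    (Ideal.span {x : AddMonoidAlgebra k M |
      ∃ m ∈ I, x = AddMonoidAlgebra.single m 1}).IsPrime := by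
  have : IsAddTorsionFree M := ⟨fun n hn a b => htf n a b (Nat.pos_of_ne_zero hn)⟩
  have : UniqueSums M := uniqueSums_of_isAddTorsionFree
  rw [← hI.ker_killMonomials k]
  exact RingHom.ker_isPrime _
end

section
/- Let k be a field, M a commutative additive monoid, and I a monoid ideal of M. Then the ideal of AddMonoidAlgebra k M generated by the monomials {single m 1 | m ∈ I} equals the set of elements of AddMonoidAlgebra k M whose support is contained in I. In particular, for m ∈ M the monomial single m 1 lies in this ideal if and only if m ∈ I, and the map sending a monoid ideal I of M to the ring ideal it generates is injective. -/
theorem IsMonoidIdeal.mem_iff_exists_eq_add {M : Type*} [AddCommMonoid M] {I : Set M}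
    (hI : IsMonoidIdeal I) (m : M) : m ∈ I ↔ ∃ m' ∈ I, ∃ d, m = d + m' := by
  constructor
  · exact fun hm => ⟨m, hm, 0, (zero_add m).symm⟩
  · rintro ⟨m', hm', d, rfl⟩
    rw [add_comm]
    exact hI m' hm' d

namespace AddMonoidAlgebra

variable (k : Type*) [Semiring k] {M : Type*} [AddCommMonoid M]

noncomputable def monomialIdeal (I : Set M) : Ideal (AddMonoidAlgebra k M) :=
  Ideal.span {x : AddMonoidAlgebra k M | ∃ m ∈ I, x = single m 1}

theorem monomialIdeal_eq_span_image_of' (I : Set M) :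
    monomialIdeal k I = Ideal.span (of' k M '' I) := by
  refine congrArg Ideal.span (Set.ext fun x => ?_)
  simp only [Set.mem_ofPred_eq, Set.mem_image, of'_apply, eq_comm]

theorem mem_monomialIdeal_iff_support_subset {I : Set M} (hI : IsMonoidIdeal I)
    (x : AddMonoidAlgebra k M) : x ∈ monomialIdeal k I ↔ (x.coeff.support : Set M) ⊆ I := by
  rw [monomialIdeal_eq_span_image_of', mem_ideal_span_of'_image]
  simp only [← hI.mem_iff_exists_eq_add]
  rfl

theorem single_one_mem_monomialIdeal_iff [Nontrivial k] {I : Set M}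
    (hI : IsMonoidIdeal I) (m : M) : single m (1 : k) ∈ monomialIdeal k I ↔ m ∈ I := by
  simp [mem_monomialIdeal_iff_support_subset k hI, coeff_single]

theorem eq_of_monomialIdeal_eq [Nontrivial k] {I J : Set M} (hI : IsMonoidIdeal I)
    (hJ : IsMonoidIdeal J) (h : monomialIdeal k I = monomialIdeal k J) : I = J := by
  ext m
  rw [← single_one_mem_monomialIdeal_iff k hI, ← single_one_mem_monomialIdeal_iff k hJ, h]

end AddMonoidAlgebra

open AddMonoidAlgebra in
/-- For a monoid ideal `I` of `M`, the ideal of `AddMonoidAlgebra k M` generated by the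
monomials with exponents in `I` consists exactly of the elements with support contained
in `I`; in particular `single m 1` lies in it iff `m ∈ I`, and the map from monoid ideals
to the ring ideals they generate is injective. -/
theorem span_monomials_eq_support_subset (k : Type*) [Field k] {M : Type*}
    [AddCommMonoid M] (I J : Set M) (hI : IsMonoidIdeal I) (hJ : IsMonoidIdeal J) :
    ((Ideal.span {x : AddMonoidAlgebra k M | ∃ m ∈ I, x = AddMonoidAlgebra.single m 1} :
        Ideal (AddMonoidAlgebra k M)) : Set (AddMonoidAlgebra k M)) =
      {x : AddMonoidAlgebra k M | (x.coeff.support : Set M) ⊆ I} ∧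
    (∀ m : M, AddMonoidAlgebra.single (R := k) m 1 ∈
      Ideal.span {x : AddMonoidAlgebra k M | ∃ m ∈ I, x = AddMonoidAlgebra.single m 1} ↔
        m ∈ I) ∧
    (Ideal.span {x : AddMonoidAlgebra k M | ∃ m ∈ I, x = AddMonoidAlgebra.single m 1} =
      Ideal.span {x : AddMonoidAlgebra k M | ∃ m ∈ J, x = AddMonoidAlgebra.single m 1} →
        I = J) :=
  ⟨Set.ext (mem_monomialIdeal_iff_support_subset k hI), single_one_mem_monomialIdeal_iff k hI,
    eq_of_monomialIdeal_eq k hI hJ⟩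
end

section
/- Let k be a field, M a commutative additive monoid, and S an additive submonoid of M whose complement I = M ∖ S is a monoid ideal of M. Then the composition of the ring homomorphism AddMonoidAlgebra k S → AddMonoidAlgebra k M induced by the inclusion S ↪ M (mapping single s c to single s c) with the quotient map AddMonoidAlgebra k M → AddMonoidAlgebra k M ⧸ J, where J is the ideal generated by {single m 1 | m ∈ I}, is a ring isomorphism AddMonoidAlgebra k S ≃ AddMonoidAlgebra k M ⧸ J. -/
namespace AddMonoidAlgebra

variable {k M : Type*} [Semiring k]

theorem mem_ideal_span_single_one_iff [AddCommMonoid M] {I : Set M} (hI : IsMonoidIdeal I)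
    {x : AddMonoidAlgebra k M} :
    x ∈ Ideal.span {y | ∃ m ∈ I, y = single m 1} ↔ ↑x.coeff.support ⊆ I := by
  have hspan : {y : AddMonoidAlgebra k M | ∃ m ∈ I, y = single m 1} = of' k M '' I := by
    ext; simp [eq_comm]
  rw [hspan, mem_ideal_span_of'_image]
  refine forall₂_congr fun m _ ↦ ⟨?_, fun hm ↦ ⟨m, hm, 0, (zero_add m).symm⟩⟩
  rintro ⟨m', hm', d, rfl⟩
  exact add_comm m' d ▸ hI m' hm' d

theorem single_mem_ideal_span_single_one [AddMonoid M] {I : Set M} {m : M} (hm : m ∈ I) (c : k) :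
    single m c ∈ Ideal.span {y : AddMonoidAlgebra k M | ∃ m ∈ I, y = single m 1} := by
  have hgen : single m 1 ∈ Ideal.span {y : AddMonoidAlgebra k M | ∃ m ∈ I, y = single m 1} :=
    Ideal.subset_span ⟨m, hm, rfl⟩
  simpa using Ideal.mul_mem_left _ (single 0 c) hgen

theorem eq_zero_of_support_mapDomain_val_subset_compl {s : Set M}
    {f : AddMonoidAlgebra k s} (h : ↑(mapDomain Subtype.val f).coeff.support ⊆ sᶜ) : f = 0 := by
  classical
  have hs : ↑(mapDomain Subtype.val f).coeff.support ⊆ s := fun m hm ↦ by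
    obtain ⟨a, -, rfl⟩ := Finset.mem_image.1 (Finsupp.mapDomain_support hm)
    exact a.2
  have hzero : mapDomain Subtype.val f = 0 := by
    rw [← coeff_eq_zero, ← Finsupp.support_eq_empty, ← Finset.coe_eq_empty,
      Set.eq_empty_iff_forall_notMem]
    exact fun m hm ↦ h hm (hs hm)
  exact mapDomain_injective Subtype.val_injective (hzero.trans (mapDomain_zero _).symm)

end AddMonoidAlgebra

/-- Let `S` be an additive submonoid of `M` whose complement `I = M ∖ S` is a monoid
ideal. Then the composite `k[S] → k[M] → k[M]/J`, where `J` is the ideal generated by the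
monomials with exponents in `I`, is a ring isomorphism. -/
theorem bijective_quotient_comp_mapDomain (k : Type*) [Field k] {M : Type*}
    [AddCommMonoid M] (S : AddSubmonoid M) (hI : IsMonoidIdeal ((S : Set M)ᶜ)) :
    Function.Bijective
      ((Ideal.Quotient.mk (Ideal.span {x : AddMonoidAlgebra k M |
          ∃ m ∈ (S : Set M)ᶜ, x = AddMonoidAlgebra.single m 1})).comp
        (AddMonoidAlgebra.mapDomainRingHom k S.subtype)) := by
  refine ⟨(injective_iff_map_eq_zero _).2 fun f hf ↦ ?_, fun z ↦ ?_⟩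
  · exact AddMonoidAlgebra.eq_zero_of_support_mapDomain_val_subset_compl
      ((AddMonoidAlgebra.mem_ideal_span_single_one_iff hI).1 (Ideal.Quotient.eq_zero_iff_mem.1 hf))
  · obtain ⟨x, rfl⟩ := Ideal.Quotient.mk_surjective z
    induction x using AddMonoidAlgebra.induction_linear with
    | zero => exact ⟨0, map_zero _⟩
    | add x y hx hy =>
      obtain ⟨f, hf⟩ := hx
      obtain ⟨g, hg⟩ := hy
      exact ⟨f + g, by rw [map_add, hf, hg, map_add]⟩
    | single m c =>
      by_cases hm : m ∈ S
      · exact ⟨AddMonoidAlgebra.single ⟨m, hm⟩ c, by simp⟩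
      · refine ⟨0, ?_⟩
        rw [map_zero, eq_comm, Ideal.Quotient.eq_zero_iff_mem]
        exact AddMonoidAlgebra.single_mem_ideal_span_single_one hm c
end
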